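/- Let k ≥ 1. In a twist region with k crossings (negative braid), label the endpoints of the k+1 arcs on each side P^+ and P^- as in the paper: α_i^+ has endpoints a_{i+1} (left) and b_i (right) for 0 ≤ i ≤ k, α_i^- has endpoints a_i and b_{i+1}, with a_0 = b_0 and a_{k+1} = b_{k+1}. Suppose there exist thresholds 1 ≤ i_0 ≤ k+1 and 1 ≤ j_0 ≤ k+1 such that a_j is 'bottom' iff j < i_0 and b_j is 'bottom' iff j < j_0. Then: if i_0 < j_0, both endpoints of each of α_{i_0}^+ (namely a_{i_0+1}, b_{i_0}) lie on opposite boundaries (top/bottom), i.e., α_{i_0}^+ is an I-arc, and similarly for another arc; in all cases (i_0 < j_0, i_0 > j_0, i_0 = j_0) there exist at least two distinct arcs each having one 'bottom' endpoint and one 'top' endpoint. -/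

import Mathlib

/-- An arc through the twist region: `plus i` is the arc `αᵢ⁺` on `P⁺` with
endpoints `a_{i+1}` (left) and `bᵢ` (right); `minus i` is the arc `αᵢ⁻` on `P⁻`
with endpoints `aᵢ` and `b_{i+1}`. -/
inductive TwistArc
  | plus (i : ℕ)
  | minus (i : ℕ)
deriving DecidableEq

/-- Validity: the index of the arc is at most `k`. -/
def TwistArc.valid (k : ℕ) : TwistArc → Prop
  | TwistArc.plus i => i ≤ k
  | TwistArc.minus i => i ≤ k

/-- Given thresholds `i₀, j₀` (`a_j` is bottom iff `j < i₀`, `b_j` is bottom iff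
`j < j₀`), an arc is an I-arc iff its two endpoints carry different labels. -/
def TwistArc.isIArc (i₀ j₀ : ℕ) : TwistArc → Prop
  | TwistArc.plus i => Xor' (i + 1 < i₀) (i < j₀)
  | TwistArc.minus i => Xor' (i < i₀) (i + 1 < j₀)

/-!
With `i₀ ≤ j₀`, the arc `α⁺_{i₀-1}` starts at the first top point `a_{i₀}` on the left and
ends at `b_{i₀-1}`, which is still bottom; likewise `α⁺_{j₀-1}` ends at the last bottom point
`b_{j₀-1}` on the right and starts at `a_{j₀}`, which is already top. Symmetrically, for
`j₀ ≤ i₀` the arcs `α⁻_{i₀-1}` and `α⁻_{j₀-1}` are I-arcs. The two arcs differ unless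
`i₀ = j₀`, and then `α⁺_{i₀-1}` and `α⁻_{i₀-1}` do the job.
-/

namespace TwistArc

variable {i₀ j₀ : ℕ}

theorem isIArc_plus_pred_left (hi₀ : 1 ≤ i₀) (h : i₀ ≤ j₀) : (plus (i₀ - 1)).isIArc i₀ j₀ :=
  Or.inr ⟨by omega, by omega⟩

theorem isIArc_plus_pred_right (hj₀ : 1 ≤ j₀) (h : i₀ ≤ j₀) : (plus (j₀ - 1)).isIArc i₀ j₀ :=
  Or.inr ⟨by omega, by omega⟩

theorem isIArc_minus_pred_left (hi₀ : 1 ≤ i₀) (h : j₀ ≤ i₀) : (minus (i₀ - 1)).isIArc i₀ j₀ :=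
  Or.inl ⟨by omega, by omega⟩

theorem isIArc_minus_pred_right (hj₀ : 1 ≤ j₀) (h : j₀ ≤ i₀) : (minus (j₀ - 1)).isIArc i₀ j₀ :=
  Or.inl ⟨by omega, by omega⟩

end TwistArc

theorem exists_two_I_arcs_general (k i₀ j₀ : ℕ)
    (hi₀ : 1 ≤ i₀) (hi₀' : i₀ ≤ k + 1) (hj₀ : 1 ≤ j₀) (hj₀' : j₀ ≤ k + 1) :
    ∃ x y : TwistArc, x ≠ y ∧ x.valid k ∧ y.valid k ∧
      x.isIArc i₀ j₀ ∧ y.isIArc i₀ j₀ := by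
  have hi : i₀ - 1 ≤ k := Nat.sub_le_iff_le_add.mpr hi₀'
  have hj : j₀ - 1 ≤ k := Nat.sub_le_iff_le_add.mpr hj₀'
  rcases lt_trichotomy i₀ j₀ with h | rfl | h
  · refine ⟨TwistArc.plus (i₀ - 1), TwistArc.plus (j₀ - 1), ?_, hi, hj,
      TwistArc.isIArc_plus_pred_left hi₀ h.le, TwistArc.isIArc_plus_pred_right hj₀ h.le⟩
    simp only [ne_eq, TwistArc.plus.injEq]
    omega
  · exact ⟨TwistArc.plus (i₀ - 1), TwistArc.minus (i₀ - 1), nofun, hi, hi,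
      TwistArc.isIArc_plus_pred_left hi₀ le_rfl, TwistArc.isIArc_minus_pred_left hi₀ le_rfl⟩
  · refine ⟨TwistArc.minus (i₀ - 1), TwistArc.minus (j₀ - 1), ?_, hi, hj,
      TwistArc.isIArc_minus_pred_left hi₀ h.le, TwistArc.isIArc_minus_pred_right hj₀ h.le⟩
    simp only [ne_eq, TwistArc.minus.injEq]
    omega

/-- Lemma `finding I arcs`(1): for any thresholds `1 ≤ i₀, j₀ ≤ k+1`, there are
at least two distinct I-arcs through a twist region with `k ≥ 1` crossings. -/
theorem exists_two_I_arcs (k i₀ j₀ : ℕ) (hk : 1 ≤ k)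
    (hi₀ : 1 ≤ i₀) (hi₀' : i₀ ≤ k + 1) (hj₀ : 1 ≤ j₀) (hj₀' : j₀ ≤ k + 1) :
    ∃ x y : TwistArc, x ≠ y ∧ x.valid k ∧ y.valid k ∧
      x.isIArc i₀ j₀ ∧ y.isIArc i₀ j₀ :=
  exists_two_I_arcs_general k i₀ j₀ hi₀ hi₀' hj₀ hj₀'
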